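/- Let (X,d) be a metric space and let γ₁, γ₂ : [0,1] → X be two constant-speed minimizing geodesics of lengths L₁ and L₂ respectively, satisfying d(γ₁(0),γ₁(1))² + d(γ₂(0),γ₂(1))² ≤ d(γ₁(0),γ₂(1))² + d(γ₂(0),γ₁(1))². Let D be an upper bound on the diameter of the union of the images of γ₁ and γ₂. Then there exists a numeric constant C (independent of the data) such that for any t₀ ∈ (0,1), |L₁ − L₂| ≤ (C·√D / √(t₀(1−t₀))) · √(d(γ₁(t₀), γ₂(t₀))). -/

import Mathlib

/- Cutting both crossing diagonals `γ₁ 0 → γ₂ 1` and `γ₂ 0 → γ₁ 1` at time `t` costs at most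
`ε = d(γ₁ t, γ₂ t)` each, and with `a = t`, `b = 1 - t` the algebraic identity
`(a L₁ + b L₂)² + (a L₂ + b L₁)² = L₁² + L₂² - 2ab (L₁ - L₂)²` turns the quadratic endpoint
inequality into `t (1 - t) (L₁ - L₂)² ≤ ε (L₁ + L₂ + ε) ≤ 3 D ε`,
and taking square roots gives the constant `C = √3`. -/

open Set Real

/-- A constant-speed minimizing geodesic `γ : [0,1] → X` of length `L`:
`d(γ s, γ t) = |s - t| * L` for all `s, t ∈ [0,1]`. -/
def IsGeodesic {X : Type} [MetricSpace X] (γ : ℝ → X) (L : ℝ) : Prop :=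
  ∀ s ∈ Set.Icc (0:ℝ) 1, ∀ t ∈ Set.Icc (0:ℝ) 1, dist (γ s) (γ t) = |s - t| * L

namespace IsGeodesic

variable {X : Type} [MetricSpace X] {γ γ₁ γ₂ : ℝ → X} {L L₁ L₂ t : ℝ}

lemma dist_zero_one (h : IsGeodesic γ L) : dist (γ 0) (γ 1) = L := by
  simpa using h 0 (left_mem_Icc.2 zero_le_one) 1 (right_mem_Icc.2 zero_le_one)

lemma dist_zero_apply (h : IsGeodesic γ L) (ht : t ∈ Icc (0 : ℝ) 1) :
    dist (γ 0) (γ t) = t * L := by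
  rw [h 0 (left_mem_Icc.2 zero_le_one) t ht, zero_sub, abs_neg, abs_of_nonneg ht.1]

lemma dist_apply_one (h : IsGeodesic γ L) (ht : t ∈ Icc (0 : ℝ) 1) :
    dist (γ t) (γ 1) = (1 - t) * L := by
  rw [h t ht 1 (right_mem_Icc.2 zero_le_one), abs_sub_comm, abs_of_nonneg (sub_nonneg.2 ht.2)]

lemma dist_zero_one_le_of_mem (h₁ : IsGeodesic γ₁ L₁) (h₂ : IsGeodesic γ₂ L₂)
    (ht : t ∈ Icc (0 : ℝ) 1) :
    dist (γ₁ 0) (γ₂ 1) ≤ t * L₁ + dist (γ₁ t) (γ₂ t) + (1 - t) * L₂ := by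
  calc dist (γ₁ 0) (γ₂ 1)
      ≤ dist (γ₁ 0) (γ₁ t) + dist (γ₁ t) (γ₂ t) + dist (γ₂ t) (γ₂ 1) := dist_triangle4 _ _ _ _
    _ = t * L₁ + dist (γ₁ t) (γ₂ t) + (1 - t) * L₂ := by
      rw [h₁.dist_zero_apply ht, h₂.dist_apply_one ht]

lemma mul_one_sub_mul_sq_sub_le (h₁ : IsGeodesic γ₁ L₁) (h₂ : IsGeodesic γ₂ L₂)
    (hquad : dist (γ₁ 0) (γ₁ 1) ^ 2 + dist (γ₂ 0) (γ₂ 1) ^ 2 ≤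
      dist (γ₁ 0) (γ₂ 1) ^ 2 + dist (γ₂ 0) (γ₁ 1) ^ 2)
    (ht : t ∈ Icc (0 : ℝ) 1) :
    t * (1 - t) * (L₁ - L₂) ^ 2 ≤
      dist (γ₁ t) (γ₂ t) * (L₁ + L₂ + dist (γ₁ t) (γ₂ t)) := by
  set ε := dist (γ₁ t) (γ₂ t)
  have hcross₁ := h₁.dist_zero_one_le_of_mem h₂ ht
  have hcross₂ := h₂.dist_zero_one_le_of_mem h₁ ht
  rw [dist_comm (γ₂ t)] at hcross₂
  rw [h₁.dist_zero_one, h₂.dist_zero_one] at hquad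
  have hsq : L₁ ^ 2 + L₂ ^ 2 ≤
      (t * L₁ + ε + (1 - t) * L₂) ^ 2 + (t * L₂ + ε + (1 - t) * L₁) ^ 2 :=
    hquad.trans (by gcongr)
  linear_combination hsq / 2

end IsGeodesic

lemma abs_le_sqrt_div_sqrt_mul_sqrt {x p c d : ℝ} (hp : 0 < p) (hc : 0 ≤ c)
    (h : p * x ^ 2 ≤ c * d) : |x| ≤ √c / √p * √d := by
  have hx : x ^ 2 ≤ c * d / p := by rw [le_div_iff₀ hp]; linarith
  calc |x| = √(x ^ 2) := (sqrt_sq_eq_abs x).symm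
    _ ≤ √(c * d / p) := sqrt_le_sqrt hx
    _ = √c / √p * √d := by rw [sqrt_div' _ hp.le, sqrt_mul hc, mul_div_right_comm]

/-- Villani's shortening lemma: there is a numeric constant `C` (independent of all
the data) such that for any metric space, any two constant-speed minimizing geodesics
`γ₁, γ₂` of lengths `L₁, L₂` satisfying the quadratic endpoint inequality, any diameter
bound `D` on the union of their images, and any `t₀ ∈ (0,1)`,
`|L₁ - L₂| ≤ C √D / √(t₀(1-t₀)) · √(d(γ₁ t₀, γ₂ t₀))`. -/
theorem shortening_lemma :
    ∃ C : ℝ, 0 < C ∧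
      ∀ (X : Type) [MetricSpace X] (γ₁ γ₂ : ℝ → X) (L₁ L₂ D : ℝ),
        0 ≤ L₁ → 0 ≤ L₂ →
        IsGeodesic γ₁ L₁ → IsGeodesic γ₂ L₂ →
        dist (γ₁ 0) (γ₁ 1) ^ 2 + dist (γ₂ 0) (γ₂ 1) ^ 2 ≤
          dist (γ₁ 0) (γ₂ 1) ^ 2 + dist (γ₂ 0) (γ₁ 1) ^ 2 →
        (∀ s ∈ Set.Icc (0:ℝ) 1, ∀ t ∈ Set.Icc (0:ℝ) 1,
          dist (γ₁ s) (γ₁ t) ≤ D ∧ dist (γ₁ s) (γ₂ t) ≤ D ∧ dist (γ₂ s) (γ₂ t) ≤ D) →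
        ∀ t₀ ∈ Set.Ioo (0:ℝ) 1,
          |L₁ - L₂| ≤ C * Real.sqrt D / Real.sqrt (t₀ * (1 - t₀)) *
            Real.sqrt (dist (γ₁ t₀) (γ₂ t₀)) := by
  refine ⟨√3, by positivity, ?_⟩
  intro X _ γ₁ γ₂ L₁ L₂ D _ _ hγ₁ hγ₂ hquad hD t₀ ht₀
  have ht₀' : t₀ ∈ Icc (0 : ℝ) 1 := Ioo_subset_Icc_self ht₀
  have h0 : (0 : ℝ) ∈ Icc (0 : ℝ) 1 := left_mem_Icc.2 zero_le_one
  have h1 : (1 : ℝ) ∈ Icc (0 : ℝ) 1 := right_mem_Icc.2 zero_le_one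
  set ε := dist (γ₁ t₀) (γ₂ t₀)
  have hL₁D : L₁ ≤ D := hγ₁.dist_zero_one ▸ (hD 0 h0 1 h1).1
  have hL₂D : L₂ ≤ D := hγ₂.dist_zero_one ▸ (hD 0 h0 1 h1).2.2
  have hεD : ε ≤ D := (hD t₀ ht₀' t₀ ht₀').2.1
  have hD0 : 0 ≤ D := dist_nonneg.trans hεD
  have hkey : t₀ * (1 - t₀) * (L₁ - L₂) ^ 2 ≤ 3 * D * ε :=
    calc t₀ * (1 - t₀) * (L₁ - L₂) ^ 2 ≤ ε * (L₁ + L₂ + ε) :=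
          hγ₁.mul_one_sub_mul_sq_sub_le hγ₂ hquad ht₀'
      _ ≤ ε * (3 * D) := mul_le_mul_of_nonneg_left (by linarith) dist_nonneg
      _ = 3 * D * ε := mul_comm _ _
  have hp : 0 < t₀ * (1 - t₀) := mul_pos ht₀.1 (sub_pos.2 ht₀.2)
  simpa only [sqrt_mul (zero_le_three : (0 : ℝ) ≤ 3)] using
    abs_le_sqrt_div_sqrt_mul_sqrt hp (by positivity) hkey
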